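/- Key step in the proof of □/◇ interchange: given a serial N-model M = (W, {≺_B}, ⊩), define M* = (W, {≺*_B}, ⊩*) where ≺*_B = ≺_D if B has the form ¬¬χ(χ(D)) and ≺*_B = ≺_B otherwise, and ⊩* agrees with ⊩ on propositional variables. Then M* is serial, and for every formula C and world x: x ⊩* χ(χ(C)) iff x ⊩ C. -/
import Mathlib


/-- Modal formulas: propositional variables, ⊥, ∧, ∨, →, □.  Negation is defined. -/
inductive Formula : Type
  | var : ℕ → Formula
  | bot : Formula
  | and : Formula → Formula → Formula
  | or : Formula → Formula → Formula
  | imp : Formula → Formula → Formula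
  | box : Formula → Formula
deriving DecidableEq

namespace Formula
/-- ¬A := A → ⊥ -/
def neg (A : Formula) : Formula := A.imp .bot
end Formula

/-- `A` is a propositional tautology (in the modal language): it is true under every
assignment of truth values that respects the propositional connectives (variables and
boxed formulas are treated as atoms). -/
def IsTautology (A : Formula) : Prop :=
  ∀ v : Formula → Prop,
    (¬ v .bot) →
    (∀ B C, v (.and B C) ↔ (v B ∧ v C)) →
    (∀ B C, v (.or B C) ↔ (v B ∨ v C)) →
    (∀ B C, v (.imp B C) ↔ (v B → v C)) →
    v A

/-- Satisfaction in an N-model `(W, {≺_B}, ⊩)` with relations `R` and valuation `V`: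
`x ⊩ □B` iff every `y` with `x ≺_B y` satisfies `B`. -/
def Sat {W : Type} (R : Formula → W → W → Prop) (V : W → ℕ → Prop) :
    W → Formula → Prop
  | w, .var n => V w n
  | _, .bot => False
  | w, .and A B => Sat R V w A ∧ Sat R V w B
  | w, .or A B => Sat R V w A ∨ Sat R V w B
  | w, .imp A B => Sat R V w A → Sat R V w B
  | w, .box A => ∀ y, R A w y → Sat R V y A

/-- The set of subformulas Sub(A). -/
def subf : Formula → Finset Formula
  | .var n => {.var n}
  | .bot => {.bot}
  | .and A B => insert (.and A B) (subf A ∪ subf B)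
  | .or A B => insert (.or A B) (subf A ∪ subf B)
  | .imp A B => insert (.imp A B) (subf A ∪ subf B)
  | .box A => insert (.box A) (subf A)

/-- The translation χ replacing every □ by ◇ = ¬□¬. -/
def chi : Formula → Formula
  | .var n => .var n
  | .bot => .bot
  | .and A B => .and (chi A) (chi B)
  | .or A B => .or (chi A) (chi B)
  | .imp A B => .imp (chi A) (chi B)
  | .box A => (((chi A).neg).box).neg

/-- Key step of the □/◇ interchange: given a serial N-model `(W, R, V)`, let `R*`
satisfy `R*_B = R_D` when `B = ¬¬χ(χ(D))` and `R*_B = R_B` otherwise, with the same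
valuation. Then `R*` is serial and `x ⊩* χ(χ(C))` iff `x ⊩ C` for all `C` and `x`. -/
theorem stmt16 (W : Type) [Nonempty W]
    (R : Formula → W → W → Prop) (V : W → ℕ → Prop)
    (hser : ∀ (B : Formula) (x : W), ∃ y : W, R B x y)
    (Rs : Formula → W → W → Prop)
    (h1 : ∀ D : Formula, Rs ((chi (chi D)).neg.neg) = R D)
    (h2 : ∀ B : Formula, (¬ ∃ D : Formula, B = (chi (chi D)).neg.neg) → Rs B = R B) :
    (∀ (B : Formula) (x : W), ∃ y : W, Rs B x y) ∧
    (∀ (C : Formula) (x : W), Sat Rs V x (chi (chi C)) ↔ Sat R V x C) := by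
  constructor
  · intro B x
    by_cases h : ∃ D : Formula, B = (chi (chi D)).neg.neg
    · obtain ⟨D, rfl⟩ := h
      rw [h1]; exact hser D x
    · rw [h2 B h]; exact hser B x
  · intro C
    induction C with
    | var n => intro x; simp [chi, Sat]
    | bot => intro x; simp [chi, Sat]
    | and A B ihA ihB => intro x; simp [chi, Sat, ihA, ihB]
    | or A B ihA ihB => intro x; simp [chi, Sat, ihA, ihB]
    | imp A B ihA ihB => intro x; simp [chi, Sat, ihA, ihB]
    | box A ih =>
      intro x
      show Sat Rs V x ((((chi (chi A)).neg.neg).box).neg.neg) ↔ _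
      have hA' : Rs (((chi (chi A)).imp .bot).imp .bot) = R A := h1 A
      simp only [Formula.neg, Sat, hA']
      constructor
      · intro h y hy
        by_contra hA
        apply h
        intro hb
        exact (hb y hy) (fun hs => hA ((ih y).mp hs))
      · intro h hb
        exact hb (fun y hy hs => hs ((ih y).mpr (h y hy)))
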